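/- Let m ≥ 2, let B be a real m×m matrix with Bᵀ = −B and B² = −I, and consider the symmetric control system ẋ_t = σ(x_t)a_t on ℝ^{m+1}, where σ(x) = [I_m ; (Bx_h)ᵀ] and the controls take values in the closed unit ball of ℝᵐ. Then the minimum time function T to reach the origin is locally Lipschitz continuous on the open set {x = (x_h,x_v) ∈ ℝ^{m+1} : x_h ≠ 0}. -/

import Mathlib

/-!
Moving straight from `y_h` to `z_h` takes time `‖z_h - y_h‖` and shifts the vertical coordinate
by `⟪B y_h, z_h - y_h⟫`. Rotating `z_h` at unit speed in the plane `span {z_h, B z_h}` then moves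
the vertical coordinate at speed `±‖z_h‖` and ends at `exp (θB) z_h` for some `θ`. As `exp (θB)`
is an isometry commuting with `B`, it is a symmetry of the system, so
`T (exp (θB) z_h, z_v) ≤ T z`. Hence, when `z_h ≠ 0`,
`T y ≤ T z + ‖z_h - y_h‖ + |z_v - y_v - ⟪B y_h, z_h - y_h⟫| / ‖z_h‖`,
and the correction term is `O (dist y z)` near a point with `x_h ≠ 0`; exchanging `y` and `z`
gives the Lipschitz bound. The same rotation followed by a segment reaches the origin, so `T` is
finite there.
-/

open Set MeasureTheory
open scoped RealInnerProductSpace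

/-- An admissible trajectory of the Hörmander-type symmetric control system
`ẋ = σ(x)a = (a, ⟪Bx_h, a⟫)`, with controls in the closed unit ball of `ℝᵐ`. -/
def IsHormTraj {m : ℕ} (B : EuclideanSpace ℝ (Fin m) →L[ℝ] EuclideanSpace ℝ (Fin m))
    (x₀ : EuclideanSpace ℝ (Fin m) × ℝ) (x : ℝ → EuclideanSpace ℝ (Fin m) × ℝ) : Prop :=
  x 0 = x₀ ∧ ContinuousOn x (Ici (0:ℝ)) ∧
    ∃ a : ℝ → EuclideanSpace ℝ (Fin m), Measurable a ∧ (∀ t, ‖a t‖ ≤ 1) ∧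
      ∀ t : ℝ, 0 ≤ t →
        x t = x₀ + ∫ s in (0:ℝ)..t,
          ((a s, ⟪B (x s).1, a s⟫) : EuclideanSpace ℝ (Fin m) × ℝ)

/-- The set of times at which the origin is reached from `x₀`. -/
def hormReachTimes {m : ℕ}
    (B : EuclideanSpace ℝ (Fin m) →L[ℝ] EuclideanSpace ℝ (Fin m))
    (x₀ : EuclideanSpace ℝ (Fin m) × ℝ) : Set ℝ :=
  {t | 0 ≤ t ∧ ∃ x : ℝ → EuclideanSpace ℝ (Fin m) × ℝ, IsHormTraj B x₀ x ∧ x t = 0}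

namespace Horm

section SkewStructure

variable {E : Type*} [NormedAddCommGroup E] [InnerProductSpace ℝ E] {B : E →L[ℝ] E}

lemma inner_apply_self_of_skew (hskew : ∀ v w : E, ⟪B v, w⟫ = -⟪v, B w⟫) (u : E) :
    ⟪B u, u⟫ = 0 := by
  linarith [hskew u u, real_inner_comm u (B u)]

lemma inner_apply_apply_of_skew (hskew : ∀ v w : E, ⟪B v, w⟫ = -⟪v, B w⟫)
    (hB2 : ∀ v, B (B v) = -v) (u w : E) : ⟪B u, B w⟫ = ⟪u, w⟫ := by
  rw [hskew, hB2, inner_neg_right, neg_neg]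

lemma norm_apply_of_inner_map_map {R : E →L[ℝ] E} (hR : ∀ u w, ⟪R u, R w⟫ = ⟪u, w⟫) (u : E) :
    ‖R u‖ = ‖u‖ :=
  (R.toLinearMap.isometryOfInner hR).norm_map u

/-- `rot B θ = exp (θ B)`, since `B² = -1`. -/
noncomputable def rot (B : E →L[ℝ] E) (θ : ℝ) : E →L[ℝ] E :=
  Real.cos θ • ContinuousLinearMap.id ℝ E + Real.sin θ • B

lemma rot_apply (θ : ℝ) (u : E) : rot B θ u = Real.cos θ • u + Real.sin θ • B u := rfl

lemma apply_rot (θ : ℝ) (u : E) : B (rot B θ u) = rot B θ (B u) := by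
  simp only [rot_apply, map_add, map_smul]

lemma inner_rot_rot (hskew : ∀ v w : E, ⟪B v, w⟫ = -⟪v, B w⟫) (hB2 : ∀ v, B (B v) = -v)
    (θ : ℝ) (u w : E) : ⟪rot B θ u, rot B θ w⟫ = ⟪u, w⟫ := by
  simp only [rot_apply, inner_add_left, inner_add_right, real_inner_smul_left,
    real_inner_smul_right, hskew u, hB2, inner_neg_right]
  linear_combination ⟪u, w⟫ * Real.sin_sq_add_cos_sq θ

lemma hasDerivAt_rot_apply (hB2 : ∀ v, B (B v) = -v) (u : E) (θ : ℝ) :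
    HasDerivAt (fun θ => rot B θ u) (B (rot B θ u)) θ := by
  refine (((Real.hasDerivAt_cos θ).smul_const u).add
    ((Real.hasDerivAt_sin θ).smul_const (B u))).congr_deriv ?_
  rw [apply_rot, rot_apply, hB2, smul_neg, neg_smul]
  abel

end SkewStructure

section ProdBall

variable {F G : Type*} [SeminormedAddCommGroup F] [SeminormedAddCommGroup G]

lemma norm_fst_lt_of_mem_ball {x₀ y : F × G} {ε : ℝ} (hy : y ∈ Metric.ball x₀ ε) :
    ‖y.1‖ < ‖x₀.1‖ + ε := by
  have : ‖y.1 - x₀.1‖ < ε := (norm_fst_le (y - x₀)).trans_lt (mem_ball_iff_norm.1 hy)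
  linarith [norm_sub_norm_le y.1 x₀.1]

lemma lt_norm_fst_of_mem_ball {x₀ y : F × G} {ε : ℝ} (hy : y ∈ Metric.ball x₀ ε) :
    ‖x₀.1‖ - ε < ‖y.1‖ := by
  have : ‖y.1 - x₀.1‖ < ε := (norm_fst_le (y - x₀)).trans_lt (mem_ball_iff_norm.1 hy)
  linarith [norm_sub_norm_le x₀.1 y.1, norm_sub_rev x₀.1 y.1]

end ProdBall

section Trajectories

variable {m : ℕ} {B : EuclideanSpace ℝ (Fin m) →L[ℝ] EuclideanSpace ℝ (Fin m)}

local notation "E" => EuclideanSpace ℝ (Fin m)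

/-- The velocity `σ(p) a` in the paper's notation. -/
noncomputable def hormVel (B : E →L[ℝ] E) (p : E × ℝ) (a : E) : E × ℝ := (a, ⟪B p.1, a⟫)

lemma isHormTraj_iff {x₀ : E × ℝ} {x : ℝ → E × ℝ} :
    IsHormTraj B x₀ x ↔ x 0 = x₀ ∧ ContinuousOn x (Ici 0) ∧ ∃ a : ℝ → E, Measurable a ∧
      (∀ t, ‖a t‖ ≤ 1) ∧ ∀ t : ℝ, 0 ≤ t → x t = x₀ + ∫ s in (0:ℝ)..t, hormVel B (x s) (a s) :=
  Iff.rfl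

lemma norm_hormVel_le (p : E × ℝ) {a : E} (ha : ‖a‖ ≤ 1) :
    ‖hormVel B p a‖ ≤ max 1 (‖B‖ * ‖p‖) := by
  refine max_le_max ha ?_
  calc ‖⟪B p.1, a⟫‖ ≤ ‖B p.1‖ * ‖a‖ := norm_inner_le_norm _ _
    _ ≤ ‖B‖ * ‖p‖ * 1 := by gcongr; exact B.le_opNorm_of_le (norm_fst_le p)
    _ = ‖B‖ * ‖p‖ := mul_one _

lemma intervalIntegrable_hormVel {x : ℝ → E × ℝ} {a : ℝ → E} (hx : ContinuousOn x (Ici 0))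
    (ha : Measurable a) (ha1 : ∀ t, ‖a t‖ ≤ 1) {p q : ℝ} (hp : 0 ≤ p) (hpq : p ≤ q) :
    IntervalIntegrable (fun s => hormVel B (x s) (a s)) volume p q := by
  have hIcc : Icc p q ⊆ Ici 0 := fun t ht => hp.trans ht.1
  obtain ⟨C, hC⟩ := isCompact_Icc.exists_bound_of_continuousOn (hx.mono hIcc)
  have hxm : AEStronglyMeasurable x (volume.restrict (Ioc p q)) :=
    ((hx.mono hIcc).mono Ioc_subset_Icc_self).aestronglyMeasurable measurableSet_Ioc
  rw [intervalIntegrable_iff_integrableOn_Ioc_of_le hpq]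
  refine IntegrableOn.of_bound measure_Ioc_lt_top
    (ha.aestronglyMeasurable.prodMk ((B.continuous.comp continuous_fst).comp_aestronglyMeasurable
      hxm |>.inner ha.aestronglyMeasurable)) (max 1 (‖B‖ * C)) ?_
  filter_upwards [ae_restrict_mem measurableSet_Ioc] with t ht
  exact (norm_hormVel_le _ (ha1 t)).trans (by gcongr; exact hC t (Ioc_subset_Icc_self ht))

lemma isHormTraj_of_hasDerivAt {x : ℝ → E × ℝ} {a : ℝ → E} (ha : Continuous a)
    (ha1 : ∀ t, ‖a t‖ ≤ 1) (hx : ∀ t, HasDerivAt x (hormVel B (x t) (a t)) t) :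
    IsHormTraj B (x 0) x := by
  have hxc : Continuous x := continuous_iff_continuousAt.2 fun t => (hx t).continuousAt
  refine isHormTraj_iff.2 ⟨rfl, hxc.continuousOn, a, ha.measurable, ha1, fun t _ => ?_⟩
  have hvel : Continuous fun s => hormVel B (x s) (a s) :=
    ha.prodMk ((B.continuous.comp (continuous_fst.comp hxc)).inner ha)
  rw [intervalIntegral.integral_eq_sub_of_hasDerivAt (fun s _ => hx s)
    (hvel.intervalIntegrable _ _), add_sub_cancel]

def HormReach (B : E →L[ℝ] E) (y z : E × ℝ) (s : ℝ) : Prop :=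
  0 ≤ s ∧ ∃ x, IsHormTraj B y x ∧ x s = z

lemma HormReach.of_hasDerivAt {x : ℝ → E × ℝ} {a : ℝ → E} (ha : Continuous a)
    (ha1 : ∀ t, ‖a t‖ ≤ 1) (hx : ∀ t, HasDerivAt x (hormVel B (x t) (a t)) t) {t : ℝ}
    (ht : 0 ≤ t) : HormReach B (x 0) (x t) t :=
  ⟨ht, x, isHormTraj_of_hasDerivAt ha ha1 hx, rfl⟩

lemma HormReach.trans {y z w : E × ℝ} {s t : ℝ} (h₁ : HormReach B y z s)
    (h₂ : HormReach B z w t) : HormReach B y w (s + t) := by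
  obtain ⟨hs, x₁, hx₁, rfl⟩ := h₁
  obtain ⟨ht, x₂, hx₂, rfl⟩ := h₂
  obtain ⟨hx₁0, hx₁c, a₁, ha₁m, ha₁1, hx₁int⟩ := isHormTraj_iff.1 hx₁
  obtain ⟨hx₂0, hx₂c, a₂, ha₂m, ha₂1, hx₂int⟩ := isHormTraj_iff.1 hx₂
  -- the `min`/`max` form makes continuity of the concatenation immediate
  let x : ℝ → E × ℝ := fun u => x₁ (min u s) + (x₂ (max (u - s) 0) - x₂ 0)
  let a : ℝ → E := fun u => if u ≤ s then a₁ u else a₂ (u - s)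
  have hx_le : ∀ u ≤ s, x u = x₁ u := fun u hu => by
    simp only [x, min_eq_left hu, max_eq_right (sub_nonpos.2 hu), sub_self, add_zero]
  have hx_ge : ∀ u, s ≤ u → x u = x₂ (u - s) := fun u hu => by
    simp only [x, min_eq_right hu, max_eq_left (sub_nonneg.2 hu), hx₂0, add_sub_cancel]
  have hxc : ContinuousOn x (Ici 0) :=
    (hx₁c.comp (continuous_id.min continuous_const).continuousOn fun u hu => le_min hu hs).add
      ((hx₂c.comp ((continuous_sub_right s).max continuous_const).continuousOn
        fun _ _ => mem_Ici.2 (le_max_right _ _)).sub continuousOn_const)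
  have ham : Measurable a :=
    Measurable.ite measurableSet_Iic ha₁m (ha₂m.comp (measurable_sub_const s))
  have ha1 : ∀ u, ‖a u‖ ≤ 1 := fun u => by
    dsimp only [a]; split_ifs
    exacts [ha₁1 u, ha₂1 _]
  have hvel₁ : ∀ u, 0 ≤ u → u ≤ s → ∫ τ in (0:ℝ)..u, hormVel B (x τ) (a τ) =
      ∫ τ in (0:ℝ)..u, hormVel B (x₁ τ) (a₁ τ) := fun u hu hus =>
    intervalIntegral.integral_congr_Ioo_of_le hu fun τ hτ => by
      simp only [a, hx_le τ (hτ.2.le.trans hus), if_pos (hτ.2.le.trans hus)]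
  have hvel₂ : ∀ u, s ≤ u → ∫ τ in s..u, hormVel B (x τ) (a τ) =
      ∫ τ in (0:ℝ)..(u - s), hormVel B (x₂ τ) (a₂ τ) := fun u hsu => by
    have hshift := intervalIntegral.integral_comp_add_right (a := 0) (b := u - s)
      (fun τ => hormVel B (x τ) (a τ)) s
    rw [zero_add, sub_add_cancel] at hshift
    rw [← hshift]
    refine intervalIntegral.integral_congr_Ioo_of_le (sub_nonneg.2 hsu) fun τ hτ => ?_
    have hτs : ¬ τ + s ≤ s := by linarith [hτ.1]
    simp only [a, hx_ge (τ + s) (by linarith [hτ.1]), if_neg hτs, add_sub_cancel_right]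
  have hvel : ∀ p q, 0 ≤ p → p ≤ q →
      IntervalIntegrable (fun τ => hormVel B (x τ) (a τ)) volume p q :=
    fun p q hp hpq => intervalIntegrable_hormVel hxc ham ha1 hp hpq
  refine ⟨add_nonneg hs ht, x, isHormTraj_iff.2 ⟨?_, hxc, a, ham, ha1, fun u hu => ?_⟩, ?_⟩
  · rw [hx_le 0 hs, hx₁0]
  · rcases le_total u s with hus | hsu
    · rw [hx_le u hus, hvel₁ u hu hus, hx₁int u hu]
    · rw [hx_ge u hsu, ← intervalIntegral.integral_add_adjacent_intervals (hvel 0 s le_rfl hs)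
        (hvel s u hs hsu), hvel₁ s hs le_rfl, hvel₂ u hsu, ← add_assoc, ← hx₁int s hs,
        hx₂int (u - s) (sub_nonneg.2 hsu)]
  · rw [hx_ge _ (le_add_of_nonneg_right ht), add_sub_cancel_left]

lemma mem_hormReachTimes {y : E × ℝ} {t : ℝ} : t ∈ hormReachTimes B y ↔ HormReach B y 0 t :=
  Iff.rfl

lemma bddBelow_hormReachTimes (y : E × ℝ) : BddBelow (hormReachTimes B y) :=
  ⟨0, fun _ ht => ht.1⟩

lemma sInf_hormReachTimes_le_add {y w : E × ℝ} {s : ℝ} (h : HormReach B y w s)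
    (hne : (hormReachTimes B w).Nonempty) :
    sInf (hormReachTimes B y) ≤ sInf (hormReachTimes B w) + s := by
  rw [← sub_le_iff_le_add]
  refine le_csInf hne fun t ht => sub_le_iff_le_add.2 ?_
  exact (csInf_le (bddBelow_hormReachTimes y) (h.trans ht)).trans_eq (add_comm s t)

lemma HormReach.map {R : E →L[ℝ] E} (hRB : ∀ w, B (R w) = R (B w))
    (hR : ∀ u w, ⟪R u, R w⟫ = ⟪u, w⟫) {y z : E × ℝ} {t : ℝ} (h : HormReach B y z t) :
    HormReach B (R y.1, y.2) (R z.1, z.2) t := by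
  obtain ⟨ht, x, hx, rfl⟩ := h
  obtain ⟨hx0, hxc, a, ham, ha1, hxint⟩ := isHormTraj_iff.1 hx
  let Φ : E × ℝ →L[ℝ] E × ℝ := R.prodMap (ContinuousLinearMap.id ℝ ℝ)
  have hvel : ∀ p b, hormVel B (Φ p) (R b) = Φ (hormVel B p b) := fun p b => by
    simp [hormVel, Φ, hRB, hR]
  refine ⟨ht, fun τ => Φ (x τ), isHormTraj_iff.2 ⟨by rw [hx0]; rfl,
    Φ.continuous.comp_continuousOn hxc, fun τ => R (a τ), R.continuous.measurable.comp ham,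
    fun τ => (norm_apply_of_inner_map_map hR _).trans_le (ha1 τ), fun u hu => ?_⟩, rfl⟩
  change Φ (x u) = Φ y + _
  simp only [hvel]
  rw [Φ.intervalIntegral_comp_comm (intervalIntegrable_hormVel hxc ham ha1 le_rfl hu), ← map_add,
    ← hxint u hu]

lemma hormReachTimes_subset_rot (hskew : ∀ v w : E, ⟪B v, w⟫ = -⟪v, B w⟫)
    (hB2 : ∀ v, B (B v) = -v) (θ : ℝ) (c : E) (v : ℝ) :
    hormReachTimes B (c, v) ⊆ hormReachTimes B (rot B θ c, v) := fun t ht => by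
  simpa [mem_hormReachTimes, Prod.mk_zero_zero] using
    (mem_hormReachTimes.1 ht).map (apply_rot θ) (inner_rot_rot hskew hB2 θ)

lemma HormReach.segment (hskew : ∀ v w : E, ⟪B v, w⟫ = -⟪v, B w⟫) (c : E) (v : ℝ) {u : E}
    (hu : ‖u‖ ≤ 1) {L : ℝ} (hL : 0 ≤ L) :
    HormReach B (c, v) (c + L • u, v + L * ⟪B c, u⟫) L := by
  have hx : ∀ τ : ℝ, HasDerivAt (fun τ : ℝ => (c + τ • u, v + τ * ⟪B c, u⟫))
      (hormVel B (c + τ • u, v + τ * ⟪B c, u⟫) u) τ := fun τ => by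
    refine ((((hasDerivAt_id τ).smul_const u).const_add c).prodMk
      (((hasDerivAt_id τ).mul_const ⟪B c, u⟫).const_add v)).congr_deriv ?_
    simp [hormVel, inner_add_left, real_inner_smul_left, inner_apply_self_of_skew hskew]
  simpa using HormReach.of_hasDerivAt (a := fun _ => u) continuous_const (fun _ => hu) hx hL

lemma HormReach.line (hskew : ∀ v w : E, ⟪B v, w⟫ = -⟪v, B w⟫) (c w : E) (v : ℝ) :
    HormReach B (c, v) (c + w, v + ⟪B c, w⟫) ‖w‖ := by
  rcases eq_or_ne w 0 with rfl | hw
  · simpa using HormReach.segment hskew c v (u := 0) (by simp) le_rfl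
  · have hw' : ‖w‖ ≠ 0 := norm_ne_zero_iff.2 hw
    have hu : ‖‖w‖⁻¹ • w‖ ≤ 1 := by rw [norm_smul, norm_inv, norm_norm, inv_mul_cancel₀ hw']
    have h := HormReach.segment hskew c v hu (norm_nonneg w)
    rwa [smul_inv_smul₀ hw', real_inner_smul_right, mul_inv_cancel_left₀ hw'] at h

lemma HormReach.rotate (hskew : ∀ v w : E, ⟪B v, w⟫ = -⟪v, B w⟫) (hB2 : ∀ v, B (B v) = -v)
    (c : E) (v : ℝ) {κ t : ℝ} (hκ : |κ| * ‖c‖ ≤ 1) (ht : 0 ≤ t) :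
    HormReach B (c, v) (rot B (κ * t) c, v + κ * ‖c‖ ^ 2 * t) t := by
  have hnorm : ∀ θ, ‖B (rot B θ c)‖ = ‖c‖ := fun θ => by
    rw [norm_apply_of_inner_map_map (inner_apply_apply_of_skew hskew hB2),
      norm_apply_of_inner_map_map (inner_rot_rot hskew hB2 θ)]
  have hx : ∀ τ : ℝ, HasDerivAt (fun τ => (rot B (κ * τ) c, v + κ * ‖c‖ ^ 2 * τ))
      (hormVel B (rot B (κ * τ) c, v + κ * ‖c‖ ^ 2 * τ) (κ • B (rot B (κ * τ) c))) τ :=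
    fun τ => by
      refine (((hasDerivAt_rot_apply hB2 c (κ * τ)).scomp τ
        ((hasDerivAt_id τ).const_mul κ)).prodMk
        (((hasDerivAt_id τ).const_mul (κ * ‖c‖ ^ 2)).const_add v)).congr_deriv ?_
      simp [hormVel, real_inner_smul_right, hnorm]
  have ha : Continuous fun τ => κ • B (rot B (κ * τ) c) := by
    simp only [rot_apply]
    fun_prop
  simpa [rot_apply] using HormReach.of_hasDerivAt ha
    (fun τ => by rw [norm_smul, Real.norm_eq_abs, hnorm]; exact hκ) hx ht

lemma HormReach.rotate_to (hskew : ∀ v w : E, ⟪B v, w⟫ = -⟪v, B w⟫) (hB2 : ∀ v, B (B v) = -v)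
    {c : E} (hc : c ≠ 0) (v v' : ℝ) :
    ∃ θ, HormReach B (c, v) (rot B θ c, v') (|v' - v| / ‖c‖) := by
  have hc' : ‖c‖ ≠ 0 := norm_ne_zero_iff.2 hc
  set κ : ℝ := SignType.sign (v' - v) / ‖c‖
  have hκ : |κ| * ‖c‖ ≤ 1 := by
    rw [abs_div, abs_norm, div_mul_cancel₀ _ hc']
    rcases lt_trichotomy (v' - v) 0 with h | h | h <;> simp [h]
  have hv' : v + κ * ‖c‖ ^ 2 * (|v' - v| / ‖c‖) = v' := by
    have := sign_mul_abs (v' - v)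
    simp only [κ]
    field_simp
    linarith
  exact ⟨_, hv' ▸ HormReach.rotate hskew hB2 c v hκ (by positivity)⟩

lemma hormReachTimes_nonempty (hskew : ∀ v w : E, ⟪B v, w⟫ = -⟪v, B w⟫)
    (hB2 : ∀ v, B (B v) = -v) {c : E} (hc : c ≠ 0) (v : ℝ) :
    (hormReachTimes B (c, v)).Nonempty := by
  obtain ⟨θ, hrot⟩ := HormReach.rotate_to hskew hB2 hc v 0
  have hline := HormReach.line hskew (rot B θ c) (-rot B θ c) 0
  rw [add_neg_cancel, inner_neg_right, inner_apply_self_of_skew hskew, neg_zero, add_zero,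
    Prod.mk_zero_zero] at hline
  exact ⟨_, hrot.trans hline⟩

/-- The duration of the path from `y` that goes straight to the fibre over `z_h` and then rotates
the horizontal component at unit speed until the vertical coordinate is `z_v`; it ends at a
rotation of `z`. -/
noncomputable def steerCost (B : E →L[ℝ] E) (y z : E × ℝ) : ℝ :=
  ‖z.1 - y.1‖ + |z.2 - (y.2 + ⟪B y.1, z.1 - y.1⟫)| / ‖z.1‖

lemma sInf_hormReachTimes_le_add_steerCost (hskew : ∀ v w : E, ⟪B v, w⟫ = -⟪v, B w⟫)
    (hB2 : ∀ v, B (B v) = -v) (y : E × ℝ) {z : E × ℝ} (hz : z.1 ≠ 0) :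
    sInf (hormReachTimes B y) ≤ sInf (hormReachTimes B z) + steerCost B y z := by
  obtain ⟨θ, hrot⟩ := HormReach.rotate_to hskew hB2 hz (y.2 + ⟪B y.1, z.1 - y.1⟫) z.2
  have hline := HormReach.line hskew y.1 (z.1 - y.1) y.2
  rw [add_sub_cancel] at hline
  have hsub := hormReachTimes_subset_rot hskew hB2 θ z.1 z.2
  have hne := hormReachTimes_nonempty hskew hB2 hz z.2
  calc sInf (hormReachTimes B y)
      ≤ sInf (hormReachTimes B (rot B θ z.1, z.2)) + steerCost B y z :=
        sInf_hormReachTimes_le_add (hline.trans hrot) (hne.mono hsub)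
    _ ≤ sInf (hormReachTimes B z) + steerCost B y z :=
        add_le_add_left (csInf_le_csInf (bddBelow_hormReachTimes _) hne hsub) _

lemma steerCost_le (hskew : ∀ v w : E, ⟪B v, w⟫ = -⟪v, B w⟫) (hB2 : ∀ v, B (B v) = -v)
    {x₀ y z : E × ℝ} (hy : y ∈ Metric.ball x₀ (‖x₀.1‖ / 2))
    (hz : z ∈ Metric.ball x₀ (‖x₀.1‖ / 2)) :
    steerCost B y z ≤ (4 + 2 / ‖x₀.1‖) * dist y z := by
  set r := ‖x₀.1‖
  have hr : 0 < r := by linarith [dist_nonneg (x := y) (y := x₀), Metric.mem_ball.1 hy]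
  have hy₁ : ‖y.1‖ ≤ 3 * r / 2 := by linarith [norm_fst_lt_of_mem_ball hy]
  have hz₁ : r / 2 ≤ ‖z.1‖ := by linarith [lt_norm_fst_of_mem_ball hz]
  have hh : ‖z.1 - y.1‖ ≤ dist y z := by
    rw [dist_comm, dist_eq_norm]; exact norm_fst_le (z - y)
  have hv : |z.2 - y.2| ≤ dist y z := by
    rw [dist_comm, dist_eq_norm, ← Real.norm_eq_abs]; exact norm_snd_le (z - y)
  have hΔ : |z.2 - (y.2 + ⟪B y.1, z.1 - y.1⟫)| ≤ dist y z + 3 * r / 2 * dist y z :=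
    calc |z.2 - (y.2 + ⟪B y.1, z.1 - y.1⟫)|
        ≤ |z.2 - y.2| + |⟪B y.1, z.1 - y.1⟫| := by rw [← sub_sub]; exact abs_sub _ _
      _ ≤ dist y z + ‖y.1‖ * dist y z := by
        gcongr
        refine (abs_real_inner_le_norm _ _).trans ?_
        rw [norm_apply_of_inner_map_map (inner_apply_apply_of_skew hskew hB2)]
        gcongr
      _ ≤ dist y z + 3 * r / 2 * dist y z := by gcongr
  have hdiv : |z.2 - (y.2 + ⟪B y.1, z.1 - y.1⟫)| / ‖z.1‖ ≤
      (dist y z + 3 * r / 2 * dist y z) / (r / 2) :=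
    div_le_div₀ (by positivity) hΔ (by positivity) hz₁
  have hsimp : (dist y z + 3 * r / 2 * dist y z) / (r / 2) = (3 + 2 / r) * dist y z := by
    field_simp
    ring
  unfold steerCost
  linarith

end Trajectories

end Horm

theorem stmt_13 {m : ℕ}
    (B : EuclideanSpace ℝ (Fin m) →L[ℝ] EuclideanSpace ℝ (Fin m))
    (hskew : ∀ v w : EuclideanSpace ℝ (Fin m), ⟪B v, w⟫ = -⟪v, B w⟫)
    (hB2 : ∀ v, B (B v) = -v) :
    ∀ x₀ : EuclideanSpace ℝ (Fin m) × ℝ, x₀.1 ≠ 0 →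
      ∃ ε > (0:ℝ), ∃ K : NNReal,
        LipschitzOnWith K (fun y => sInf (hormReachTimes B y))
          (Metric.ball x₀ ε) := by
  intro x₀ hx₀
  have hr : 0 < ‖x₀.1‖ := norm_pos_iff.2 hx₀
  refine ⟨‖x₀.1‖ / 2, half_pos hr, Real.toNNReal (4 + 2 / ‖x₀.1‖),
    LipschitzOnWith.of_le_add_mul' _ fun y hy z hz => ?_⟩
  have hz₁ : z.1 ≠ 0 := norm_pos_iff.1 (by linarith [Horm.lt_norm_fst_of_mem_ball hz])
  calc sInf (hormReachTimes B y) ≤ sInf (hormReachTimes B z) + Horm.steerCost B y z :=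
        Horm.sInf_hormReachTimes_le_add_steerCost hskew hB2 y hz₁
    _ ≤ sInf (hormReachTimes B z) + (4 + 2 / ‖x₀.1‖) * dist y z := by
        gcongr
        exact Horm.steerCost_le hskew hB2 hy hz
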